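/- For $c \in (0,1)$, $\frac{1}{2\pi}\int_0^{2\pi} \frac{2\sin^2\theta}{1 + c - 2\sqrt{c}\cos\theta}\,\log\big(1 + c - 2\sqrt{c}\cos\theta\big)\, d\theta = \frac{c-1}{c}\log(1-c) - 1$. -/

import Mathlib

/-!
Write `r = √c` and `D = 1 + r² - 2 r cos θ = |1 - r e^{iθ}|²`. Eliminating `cos θ` through `D` gives
`2 sin² θ / D = (1 + r cos θ - (1 - r²) Q) / r²` with `Q = (1 - r cos θ) / D = ∑ rⁿ cos nθ`, the real
part of the geometric series in `r e^{iθ}`. The real part of the series of `-log (1 - r e^{iθ})`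
gives `log D = -2 ∑ rⁿ cos (nθ) / n`, so by orthogonality `∫ cos (mθ) log D = -2π rᵐ / m`. Hence
`∫ log D = 0`, `∫ cos θ log D = -2π r` and `∫ Q log D = -2π ∑ r²ⁿ / n = 2π log (1 - r²)`. All
exchanges of sum and integral are dominated by `|r|ⁿ`.
-/

open Real

lemma hasSum_pow_div_natCast (x : ℝ) (hx : |x| < 1) :
    HasSum (fun n : ℕ => x ^ n / n) (-log (1 - x)) := by
  have h := Complex.hasSum_re (Complex.hasSum_taylorSeries_neg_log (z := x) (by simpa using hx))
  have h1 : (0:ℝ) ≤ 1 - x := by linarith [le_abs_self x]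
  rw [← Complex.ofReal_one, ← Complex.ofReal_sub, ← Complex.ofReal_log h1] at h
  simpa [← Complex.ofReal_pow] using h

lemma hasSum_intervalIntegral_mul {g : ℝ → ℝ} {F : ℕ → ℝ → ℝ} {f : ℝ → ℝ} {C : ℕ → ℝ}
    (a b : ℝ) (hg : Continuous g) (hF : ∀ n, Continuous (F n)) (hFC : ∀ n t, |F n t| ≤ C n)
    (hC : Summable C) (hf : ∀ t, HasSum (F · t) (f t)) :
    HasSum (fun n => ∫ t in a..b, g t * F n t) (∫ t in a..b, g t * f t) := by
  refine intervalIntegral.hasSum_integral_of_dominated_convergence (fun n t => C n * |g t|)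
    (fun n => ((hg.mul (hF n)).aestronglyMeasurable)) (fun n => ?_)
    (Filter.Eventually.of_forall fun t _ => hC.mul_right _) ?_
    (Filter.Eventually.of_forall fun t _ => (hf t).mul_left (g t))
  · refine Filter.Eventually.of_forall fun t _ => ?_
    rw [Real.norm_eq_abs, abs_mul, mul_comm]
    exact mul_le_mul_of_nonneg_right (hFC n t) (abs_nonneg _)
  · simp_rw [tsum_mul_right]
    exact (continuous_const.mul hg.abs).intervalIntegrable a b

lemma integral_cos_int_mul {k : ℤ} (hk : k ≠ 0) : ∫ θ in (0:ℝ)..2 * π, cos (k * θ) = 0 := by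
  have hk' : (k : ℝ) ≠ 0 := by exact_mod_cast hk
  have hsin : sin (k * (2 * π)) = 0 := by
    rw [← sin_int_mul_pi (2 * k)]; push_cast; ring_nf
  simp [intervalIntegral.integral_comp_mul_left (fun x => cos x) hk', hsin]

lemma integral_cos_mul_cos_of_ne {m n : ℕ} (h : m ≠ n) :
    ∫ θ in (0:ℝ)..2 * π, cos (m * θ) * cos (n * θ) = 0 := by
  have hsum (θ : ℝ) : cos (m * θ) * cos (n * θ)
      = (cos (((m - n : ℤ) : ℝ) * θ) + cos (((m + n : ℤ) : ℝ) * θ)) / 2 := by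
    push_cast
    rw [sub_mul, add_mul, ← two_mul_cos_mul_cos]; ring
  simp_rw [hsum]
  rw [intervalIntegral.integral_div, intervalIntegral.integral_add
    ((by fun_prop : Continuous _).intervalIntegrable _ _)
    ((by fun_prop : Continuous _).intervalIntegrable _ _),
    integral_cos_int_mul (by omega), integral_cos_int_mul (by omega)]
  simp

lemma integral_cos_mul_cos_self {n : ℕ} (hn : n ≠ 0) :
    ∫ θ in (0:ℝ)..2 * π, cos (n * θ) * cos (n * θ) = π := by
  have hsq (θ : ℝ) : cos (n * θ) * cos (n * θ) = (1 + cos (((2 * n : ℤ) : ℝ) * θ)) / 2 := by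
    rw [← sq, cos_sq]; push_cast; ring_nf
  simp_rw [hsq]
  rw [intervalIntegral.integral_div, intervalIntegral.integral_add intervalIntegrable_const
    ((by fun_prop : Continuous _).intervalIntegrable _ _), integral_cos_int_mul (by omega)]
  simp

noncomputable def poissonDenom (r θ : ℝ) : ℝ := 1 + r ^ 2 - 2 * r * cos θ

section

variable {r : ℝ}

lemma poissonDenom_pos (hr : |r| < 1) (θ : ℝ) : 0 < poissonDenom r θ := by
  have h : r * cos θ ≤ |r| := by
    calc r * cos θ ≤ |r * cos θ| := le_abs_self _
      _ = |r| * |cos θ| := abs_mul _ _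
      _ ≤ |r| := mul_le_of_le_one_right (abs_nonneg r) (abs_cos_le_one θ)
  unfold poissonDenom
  nlinarith [sq_abs r, abs_nonneg r]

@[fun_prop]
lemma continuous_poissonDenom (r : ℝ) : Continuous (poissonDenom r) := by
  unfold poissonDenom; fun_prop

lemma normSq_one_sub_mul_exp (r θ : ℝ) :
    Complex.normSq (1 - r * Complex.exp (θ * Complex.I)) = poissonDenom r θ := by
  rw [Complex.normSq_apply]
  simp only [Complex.sub_re, Complex.sub_im, Complex.one_re, Complex.one_im, Complex.re_ofReal_mul,
    Complex.im_ofReal_mul, Complex.exp_ofReal_mul_I_re, Complex.exp_ofReal_mul_I_im]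
  unfold poissonDenom
  linear_combination r ^ 2 * sin_sq_add_cos_sq θ

lemma re_mul_exp_pow (r θ : ℝ) (n : ℕ) :
    (((r : ℂ) * Complex.exp (θ * Complex.I)) ^ n).re = r ^ n * cos (n * θ) := by
  rw [mul_pow, ← Complex.exp_nat_mul, ← Complex.ofReal_pow, Complex.re_ofReal_mul, ← mul_assoc,
    ← Complex.ofReal_natCast, ← Complex.ofReal_mul, Complex.exp_ofReal_mul_I_re]

lemma norm_mul_exp_lt_one (hr : |r| < 1) (θ : ℝ) : ‖(r : ℂ) * Complex.exp (θ * Complex.I)‖ < 1 := by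
  rwa [norm_mul, Complex.norm_exp_ofReal_mul_I, mul_one, Complex.norm_real, Real.norm_eq_abs]

lemma hasSum_pow_mul_cos (hr : |r| < 1) (θ : ℝ) :
    HasSum (fun n : ℕ => r ^ n * cos (n * θ)) ((1 - r * cos θ) / poissonDenom r θ) := by
  have h := Complex.hasSum_re (hasSum_geometric_of_norm_lt_one (norm_mul_exp_lt_one hr θ))
  simp only [re_mul_exp_pow] at h
  convert h using 1
  rw [Complex.inv_re, normSq_one_sub_mul_exp]
  simp [Complex.exp_ofReal_mul_I_re]

lemma hasSum_pow_div_mul_cos (hr : |r| < 1) (θ : ℝ) :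
    HasSum (fun n : ℕ => r ^ n / n * cos (n * θ)) (-log (poissonDenom r θ) / 2) := by
  have h := Complex.hasSum_re (Complex.hasSum_taylorSeries_neg_log (norm_mul_exp_lt_one hr θ))
  simp only [Complex.div_natCast_re, re_mul_exp_pow] at h
  convert h using 1
  · ext n; ring
  · rw [Complex.neg_re, Complex.log_re, Complex.norm_def, normSq_one_sub_mul_exp,
      log_sqrt (poissonDenom_pos hr θ).le]
    ring

lemma abs_pow_div_mul_cos_le (r : ℝ) (n : ℕ) (θ : ℝ) : |r ^ n / n * cos (n * θ)| ≤ |r| ^ n := by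
  have hdiv : |r ^ n / n| ≤ |r| ^ n := by
    rw [abs_div, abs_pow, Nat.abs_cast]
    rcases n.eq_zero_or_pos with rfl | hn
    · simp
    · exact div_le_self (by positivity) (by exact_mod_cast hn)
  rw [abs_mul]
  exact (mul_le_mul hdiv (abs_cos_le_one _) (abs_nonneg _) (by positivity)).trans_eq (mul_one _)

lemma abs_pow_mul_cos_le (r : ℝ) (n : ℕ) (θ : ℝ) : |r ^ n * cos (n * θ)| ≤ |r| ^ n := by
  rw [abs_mul, abs_pow]
  exact mul_le_of_le_one_right (by positivity) (abs_cos_le_one _)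

/-- For `m = 0` the right side is `0` (as `r ^ 0 / 0 = 0`), which is indeed `∫ log D`. -/
lemma integral_cos_mul_log_poissonDenom (hr : |r| < 1) (m : ℕ) :
    ∫ θ in (0:ℝ)..2 * π, cos (m * θ) * log (poissonDenom r θ) = -(2 * π * r ^ m / m) := by
  have hswap := hasSum_intervalIntegral_mul 0 (2 * π) (by fun_prop : Continuous fun θ => cos (m * θ))
    (fun n => by fun_prop) (abs_pow_div_mul_cos_le r)
    (summable_geometric_of_abs_lt_one (by rwa [abs_abs])) (hasSum_pow_div_mul_cos hr)
  have hterm (n : ℕ) : ∫ θ in (0:ℝ)..2 * π, cos (m * θ) * (r ^ n / n * cos (n * θ))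
      = r ^ n / n * ∫ θ in (0:ℝ)..2 * π, cos (m * θ) * cos (n * θ) := by
    simp_rw [mul_left_comm (cos _)]
    exact intervalIntegral.integral_const_mul _ _
  have hval := hswap.unique <| hasSum_single m fun n hn => by
    rw [hterm, integral_cos_mul_cos_of_ne hn.symm, mul_zero]
  rw [hterm] at hval
  simp_rw [mul_div_assoc', intervalIntegral.integral_div, mul_neg, intervalIntegral.integral_neg]
    at hval
  rcases eq_or_ne m 0 with rfl | hm
  · simp_all
  · rw [integral_cos_mul_cos_self hm] at hval
    linear_combination -2 * hval

lemma integral_log_poissonDenom_mul (hr : |r| < 1) :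
    ∫ θ in (0:ℝ)..2 * π, log (poissonDenom r θ) * ((1 - r * cos θ) / poissonDenom r θ)
      = 2 * π * log (1 - r ^ 2) := by
  have hswap := hasSum_intervalIntegral_mul 0 (2 * π)
    ((continuous_poissonDenom r).log fun θ => (poissonDenom_pos hr θ).ne')
    (fun n => by fun_prop) (abs_pow_mul_cos_le r)
    (summable_geometric_of_abs_lt_one (by rwa [abs_abs])) (hasSum_pow_mul_cos hr)
  have hterm (n : ℕ) : ∫ θ in (0:ℝ)..2 * π, log (poissonDenom r θ) * (r ^ n * cos (n * θ))
      = -(2 * π) * ((r ^ 2) ^ n / n) := by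
    simp_rw [mul_left_comm _ (r ^ n), mul_comm (log _)]
    rw [intervalIntegral.integral_const_mul, integral_cos_mul_log_poissonDenom hr]
    ring
  have hr2 : |r ^ 2| < 1 := by
    rw [abs_pow]; exact pow_lt_one₀ (abs_nonneg r) hr two_ne_zero
  have hsum := (hasSum_pow_div_natCast (r ^ 2) hr2).mul_left (-(2 * π))
  rw [hswap.unique (by simpa only [← hterm] using hsum)]
  ring

lemma two_sin_sq_div_poissonDenom {θ : ℝ} (hr0 : r ≠ 0) (hD : poissonDenom r θ ≠ 0) :
    2 * sin θ ^ 2 / poissonDenom r θ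
      = (1 + r * cos θ - (1 - r ^ 2) * ((1 - r * cos θ) / poissonDenom r θ)) / r ^ 2 := by
  field_simp
  unfold poissonDenom
  linear_combination (2 * r ^ 2) * sin_sq_add_cos_sq θ

lemma integral_two_sin_sq_div_mul_log_poissonDenom (hr0 : r ≠ 0) (hr : |r| < 1) :
    ∫ θ in (0:ℝ)..2 * π, 2 * sin θ ^ 2 / poissonDenom r θ * log (poissonDenom r θ)
      = 2 * π * ((r ^ 2 - 1) / r ^ 2 * log (1 - r ^ 2) - 1) := by
  have hD θ := (poissonDenom_pos hr θ).ne'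
  have hlog : Continuous fun θ => log (poissonDenom r θ) := (continuous_poissonDenom r).log hD
  have hQ : Continuous fun θ => (1 - r * cos θ) / poissonDenom r θ :=
    (by fun_prop : Continuous fun θ => 1 - r * cos θ).div (continuous_poissonDenom r) hD
  have hsplit (θ : ℝ) : 2 * sin θ ^ 2 / poissonDenom r θ * log (poissonDenom r θ)
      = (cos ((0:ℕ) * θ) * log (poissonDenom r θ) + r * (cos ((1:ℕ) * θ) * log (poissonDenom r θ))
        - (1 - r ^ 2) * (log (poissonDenom r θ) * ((1 - r * cos θ) / poissonDenom r θ))) / r ^ 2 := by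
    rw [two_sin_sq_div_poissonDenom hr0 (hD θ)]
    simp only [Nat.cast_zero, zero_mul, cos_zero, Nat.cast_one, one_mul]
    ring
  simp_rw [hsplit]
  rw [intervalIntegral.integral_div, intervalIntegral.integral_sub, intervalIntegral.integral_add,
    intervalIntegral.integral_const_mul, intervalIntegral.integral_const_mul,
    integral_cos_mul_log_poissonDenom hr, integral_cos_mul_log_poissonDenom hr,
    integral_log_poissonDenom_mul hr]
  · push_cast
    field_simp
    ring
  all_goals exact Continuous.intervalIntegrable (by fun_prop) _ _

end

theorem mp_log_trig_integral (c : ℝ) (hc : c ∈ Set.Ioo (0:ℝ) 1) :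
    (1 / (2 * Real.pi)) * ∫ θ in (0:ℝ)..(2 * Real.pi),
        (2 * Real.sin θ ^ 2 / (1 + c - 2 * Real.sqrt c * Real.cos θ))
          * Real.log (1 + c - 2 * Real.sqrt c * Real.cos θ)
      = (c - 1) / c * Real.log (1 - c) - 1 := by
  obtain ⟨hc0, hc1⟩ := hc
  have hsq : sqrt c ^ 2 = c := sq_sqrt hc0.le
  have hr0 : sqrt c ≠ 0 := (sqrt_pos.mpr hc0).ne'
  have hr1 : |sqrt c| < 1 := by
    rwa [abs_of_nonneg (sqrt_nonneg c), sqrt_lt' one_pos, one_pow]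
  have hD (θ : ℝ) : 1 + c - 2 * sqrt c * cos θ = poissonDenom (sqrt c) θ := by
    rw [poissonDenom, hsq]
  simp_rw [hD]
  rw [integral_two_sin_sq_div_mul_log_poissonDenom hr0 hr1, hsq]
  field_simp
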